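/- Let H be a real Hilbert space with fundamental symmetry Θ and Krein inner product B(x, y) := ⟪x, Θ y⟫, with positive part V⁺ := ker(Θ − id) and negative part V⁻ := ker(Θ + id). Let W be a closed subspace of H with W = {v ∈ H : B(v, w) = 0 for all w ∈ W}. Then for every v ∈ V⁺ there exists a unique w ∈ V⁻ such that v + w ∈ W; in other words, W is the graph of a map from V⁺ to V⁻. -/
import Mathlib


open scoped RealInnerProductSpace

/-- In a real Krein space with positive part `V⁺ = ker (Θ - id)` and
negative part `V⁻ = ker (Θ + id)`, a closed hypermaximal neutral subspace `W` is the graph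
of a map `V⁺ → V⁻`: for every `v ∈ V⁺` there is a unique `w ∈ V⁻` with `v + w ∈ W`. -/
theorem stmt_2 {H : Type*} [NormedAddCommGroup H] [InnerProductSpace ℝ H] [CompleteSpace H]
    (Θ : H →L[ℝ] H) (hΘ2 : ∀ x, Θ (Θ x) = x)
    (hΘsym : ∀ x y, ⟪Θ x, y⟫ = ⟪x, Θ y⟫)
    (W : Submodule ℝ H) (hWclosed : IsClosed (W : Set H))
    (hW : (W : Set H) = {v : H | ∀ w ∈ W, ⟪v, Θ w⟫ = 0}) :
    ∀ v : H, Θ v = v → ∃! w : H, Θ w = -w ∧ v + w ∈ W := by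
  -- membership characterization
  have hmem : ∀ x : H, x ∈ W ↔ ∀ w ∈ W, ⟪x, Θ w⟫ = 0 := by
    intro x
    constructor
    · intro hx
      have : x ∈ {v : H | ∀ w ∈ W, ⟪v, Θ w⟫ = 0} := hW ▸ hx
      exact this
    · intro hx
      have : x ∈ (W : Set H) := hW ▸ hx
      exact this
  -- neutrality
  have hneu : ∀ w ∈ W, ⟪w, Θ w⟫ = 0 := fun w hw => (hmem w).mp hw w hw
  have hΘnorm : ∀ x : H, ⟪Θ x, Θ x⟫ = ⟪x, x⟫ := by
    intro x; rw [hΘsym, hΘ2]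
  -- the positive projection
  set Pp : H →L[ℝ] H := (2 : ℝ)⁻¹ • (ContinuousLinearMap.id ℝ H + Θ) with hPp
  have hPp_apply : ∀ x : H, Pp x = (2 : ℝ)⁻¹ • (x + Θ x) := by
    intro x; simp [hPp]
  -- norm identity on W
  have hnorm2 : ∀ w ∈ W, ‖w‖ ^ 2 = 2 * ‖Pp w‖ ^ 2 := by
    intro w hw
    have h1 : ⟪w + Θ w, w + Θ w⟫ = 2 * ⟪w, w⟫ := by
      rw [real_inner_add_add_self, hneu w hw, hΘnorm]; ring
    have h2 : ‖Pp w‖ ^ 2 = ((2 : ℝ)⁻¹) ^ 2 * ‖w + Θ w‖ ^ 2 := by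
      rw [hPp_apply, norm_smul]
      simp [mul_pow]
    have h3 : ‖w + Θ w‖ ^ 2 = 2 * ‖w‖ ^ 2 := by
      rw [← real_inner_self_eq_norm_sq, ← real_inner_self_eq_norm_sq, h1]
    rw [h2, h3]; ring
  -- image of W under Pp
  set S : Submodule ℝ H := W.map (Pp : H →ₗ[ℝ] H) with hS
  have hSmem : ∀ y : H, y ∈ S ↔ ∃ w ∈ W, Pp w = y := by
    intro y; simp [hS]
  -- S is closed
  have hScomplete : IsClosed (S : Set H) := by
    haveI : CompleteSpace W := hWclosed.completeSpace_coe
    set g : W →L[ℝ] H := Pp.comp W.subtypeL with hg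
    have hanti : AntilipschitzWith (⟨Real.sqrt 2, Real.sqrt_nonneg 2⟩ : NNReal) g := by
      apply g.antilipschitz_of_bound
      intro x
      have hx2 : ‖(x : H)‖ ^ 2 = 2 * ‖g x‖ ^ 2 := by
        simpa [hg] using hnorm2 x x.2
      have : ‖(x : H)‖ = Real.sqrt 2 * ‖g x‖ := by
        rw [← Real.sqrt_sq (norm_nonneg (x : H)), hx2, Real.sqrt_mul (by norm_num),
          Real.sqrt_sq (norm_nonneg (g x))]
      exact le_of_eq this
    have hrange : Set.range g = (S : Set H) := by
      ext y
      simp only [Set.mem_range, SetLike.mem_coe, hSmem]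
      constructor
      · rintro ⟨x, rfl⟩; exact ⟨x, x.2, rfl⟩
      · rintro ⟨w, hw, rfl⟩; exact ⟨⟨w, hw⟩, rfl⟩
    rw [← hrange]
    exact hanti.isClosed_range g.uniformContinuous
  haveI : CompleteSpace S := hScomplete.completeSpace_coe
  intro v hv
  -- orthogonal decomposition of v against S
  obtain ⟨s, hs, z, hz, hvsz⟩ := S.exists_add_mem_mem_orthogonal v
  -- Θ fixes every element of S
  have hSfix : ∀ y ∈ S, Θ y = y := by
    intro y hy
    obtain ⟨w, hw, rfl⟩ := (hSmem y).mp hy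
    rw [hPp_apply]
    simp only [map_smul, map_add, hΘ2]
    rw [add_comm]
  -- Θ fixes z
  have hzfix : Θ z = z := by
    have : z = v - s := by rw [hvsz]; abel
    rw [this]
    simp only [map_sub, hv, hSfix s hs]
  -- z is B-orthogonal to W, hence z ∈ W
  have hzW : z ∈ W := by
    rw [hmem]
    intro w hw
    have hab : ⟪z, Θ w⟫ = ⟪z, w⟫ := by
      conv_lhs => rw [← hzfix, hΘsym, hΘ2]
    have hsum : ⟪z, w⟫ + ⟪z, Θ w⟫ = 0 := by
      have hps : Pp w ∈ S := (hSmem _).mpr ⟨w, hw, rfl⟩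
      have h0 : ⟪z, Pp w⟫ = 0 :=
        Submodule.inner_left_of_mem_orthogonal hps hz
      rw [hPp_apply, real_inner_smul_right, inner_add_right] at h0
      linarith
    linarith [hab, hsum]
  -- z = 0
  have hz0 : z = 0 := by
    have h := hneu z hzW
    rw [hzfix] at h
    exact inner_self_eq_zero.mp h
  have hvS : v ∈ S := by rw [hvsz, hz0, add_zero]; exact hs
  obtain ⟨w₀, hw₀, hw₀v⟩ := (hSmem v).mp hvS
  have hhalf : (2 : ℝ)⁻¹ • (w₀ + Θ w₀) = v := by rw [← hPp_apply, hw₀v]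
  have hsum : w₀ + Θ w₀ = (2 : ℝ) • v := by
    calc w₀ + Θ w₀ = (2 : ℝ) • ((2 : ℝ)⁻¹ • (w₀ + Θ w₀)) := by module
    _ = (2 : ℝ) • v := by rw [hhalf]
  have hθw₀ : Θ w₀ = (2 : ℝ) • v - w₀ := by rw [← hsum]; abel
  have hθwv : Θ (w₀ - v) = -(w₀ - v) := by
    simp only [map_sub, hv, hθw₀]
    module
  refine ⟨w₀ - v, ⟨hθwv, ?_⟩, ?_⟩
  · -- v + (w₀ - v) ∈ W
    have : v + (w₀ - v) = w₀ := by abel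
    rw [this]; exact hw₀
  · -- uniqueness
    rintro y ⟨hy1, hy2⟩
    have hd : y - (w₀ - v) ∈ W := by
      have : y - (w₀ - v) = (v + y) - (v + (w₀ - v)) := by abel
      rw [this]
      refine Submodule.sub_mem W hy2 ?_
      have : v + (w₀ - v) = w₀ := by abel
      rw [this]; exact hw₀
    set d := y - (w₀ - v) with hdd
    have hΘd : Θ d = -d := by
      simp only [hdd, map_sub, hy1, hθwv]
      abel
    have h := hneu d hd
    rw [hΘd, inner_neg_right, neg_eq_zero] at h
    have : d = 0 := inner_self_eq_zero.mp h
    have := sub_eq_zero.mp (hdd ▸ this)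
    exact this
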